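/- arXiv:1510.07778 — 2 statements merged into one kernel-verified Lean document; each statement's English description precedes it below -/
import Mathlib

section
/- For the path graph Γ on [n+1] with n ≥ 3, the maximum value i_max(Γ) of i(γ) over all intervals γ equals n(n+2)/4 if n is even, and (n+1)²/4 if n is odd. -/
/-- An interval `{a, a+1, ..., b}` with `1 ≤ a ≤ b ≤ n+1`, viewed inside `[n+1]`. -/
def IsInterval (n : ℕ) (S : Finset ℕ) : Prop :=
  ∃ a b : ℕ, 1 ≤ a ∧ a ≤ b ∧ b ≤ n + 1 ∧ S = Finset.Icc a b

/-- `γ̃` either intersects `γ` nontrivially, or is disjoint from `γ` with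
`γ ∪ γ̃` an interval (connected union in the path graph). -/
def iRel (n : ℕ) (γ J : Finset ℕ) : Prop :=
  (γ ∩ J ≠ ∅ ∧ γ ∩ J ≠ γ ∧ γ ∩ J ≠ J) ∨ (γ ∩ J = ∅ ∧ IsInterval n (γ ∪ J))

/-- `i(γ)`: the number of intervals `γ̃` related to `γ` as above. -/
noncomputable def iCount (n : ℕ) (γ : Finset ℕ) : ℕ :=
  Nat.card {J : Finset ℕ // IsInterval n J ∧ iRel n γ J}

/-- `i_max`: the maximum of `i(γ)` over all intervals `γ`. -/
noncomputable def iMax (n : ℕ) : ℕ :=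
  sSup {k | ∃ γ : Finset ℕ, IsInterval n γ ∧ iCount n γ = k}

lemma icc_inj {c d c' d' : ℕ} (h : c ≤ d) (h' : c' ≤ d')
    (he : Finset.Icc c d = Finset.Icc c' d') : c = c' ∧ d = d' := by
  have h1 : c ∈ Finset.Icc c' d' := he ▸ Finset.mem_Icc.mpr ⟨le_refl c, h⟩
  have h2 : d ∈ Finset.Icc c' d' := he ▸ Finset.mem_Icc.mpr ⟨h, le_refl d⟩
  have h3 : c' ∈ Finset.Icc c d := he.symm ▸ Finset.mem_Icc.mpr ⟨le_refl c', h'⟩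
  have h4 : d' ∈ Finset.Icc c d := he.symm ▸ Finset.mem_Icc.mpr ⟨h', le_refl d'⟩
  rw [Finset.mem_Icc] at h1 h2 h3 h4
  omega

lemma iCount_eq (n a b : ℕ) (ha : 1 ≤ a) (hab : a ≤ b) (hb : b ≤ n + 1) :
    iCount n (Finset.Icc a b) = (b - a + 1) * (n + a - b) := by
  classical
  set T : Finset (ℕ × ℕ) :=
    (Finset.Icc 1 (a-1) ×ˢ Finset.Icc (a-1) (b-1)) ∪
    (Finset.Icc (a+1) (b+1) ×ˢ Finset.Icc (b+1) (n+1)) with hT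
  have hTmem : ∀ p : ℕ × ℕ, p ∈ T ↔
      (((1 ≤ p.1 ∧ p.1 ≤ a-1) ∧ (a-1 ≤ p.2 ∧ p.2 ≤ b-1)) ∨
       ((a+1 ≤ p.1 ∧ p.1 ≤ b+1) ∧ (b+1 ≤ p.2 ∧ p.2 ≤ n+1))) := by
    intro p
    simp [hT, Finset.mem_union, Finset.mem_product, Finset.mem_Icc]
  set S : Finset (Finset ℕ) := T.image (fun p => Finset.Icc p.1 p.2) with hS
  have hiff : ∀ J : Finset ℕ,
      (IsInterval n J ∧ iRel n (Finset.Icc a b) J) ↔ J ∈ S := by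
    intro J
    constructor
    · rintro ⟨⟨c, d, hc1, hcd, hd, rfl⟩, hrel⟩
      rw [hS, Finset.mem_image]
      refine ⟨(c, d), (hTmem (c, d)).mpr ?_, rfl⟩
      rcases hrel with ⟨h1, h2, h3⟩ | ⟨h1, h2⟩
      · obtain ⟨x, hx⟩ := Finset.nonempty_iff_ne_empty.mpr h1
        rw [Finset.mem_inter, Finset.mem_Icc, Finset.mem_Icc] at hx
        have h2' : ¬ (Finset.Icc a b ⊆ Finset.Icc c d) :=
          fun h => h2 (Finset.inter_eq_left.mpr h)
        rw [Finset.Icc_subset_Icc_iff hab] at h2'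
        have h3' : ¬ (Finset.Icc c d ⊆ Finset.Icc a b) :=
          fun h => h3 (Finset.inter_eq_right.mpr h)
        rw [Finset.Icc_subset_Icc_iff hcd] at h3'
        omega
      · have key := Finset.eq_empty_iff_forall_notMem.mp h1
        have ka := key a
        have kc := key c
        rw [Finset.mem_inter, Finset.mem_Icc, Finset.mem_Icc] at ka kc
        obtain ⟨e, f, he1, hef, hf, hU⟩ := h2
        have hmem : ∀ x, ((a ≤ x ∧ x ≤ b) ∨ (c ≤ x ∧ x ≤ d)) ↔ (e ≤ x ∧ x ≤ f) := by
          intro x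
          have := Finset.ext_iff.mp hU x
          simpa [Finset.mem_union, Finset.mem_Icc] using this
        have hb' := (hmem b).mp (Or.inl ⟨hab, le_refl b⟩)
        have hc' := (hmem c).mp (Or.inr ⟨le_refl c, hcd⟩)
        have ha' := (hmem a).mp (Or.inl ⟨le_refl a, hab⟩)
        have hd' := (hmem d).mp (Or.inr ⟨hcd, le_refl d⟩)
        rcases (by omega : b < c ∨ d < a) with hlt | hlt
        · have := (hmem (b+1)).mpr ⟨by omega, by omega⟩
          omega
        · have := (hmem (a-1)).mpr ⟨by omega, by omega⟩
          omega
    · intro hJ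
      rw [hS, Finset.mem_image] at hJ
      obtain ⟨⟨c, d⟩, hp, rfl⟩ := hJ
      rw [hTmem] at hp
      rcases hp with ⟨⟨hc1, hc2⟩, hd1, hd2⟩ | ⟨⟨hc1, hc2⟩, hd1, hd2⟩
      · -- left side: c ∈ [1, a-1], d ∈ [a-1, b-1]; note a ≥ 2
        refine ⟨⟨c, d, hc1, by omega, by omega, rfl⟩, ?_⟩
        by_cases hda : a ≤ d
        · left
          refine ⟨?_, ?_, ?_⟩
          · exact Finset.ne_empty_of_mem (a := a)
              (by rw [Finset.mem_inter, Finset.mem_Icc, Finset.mem_Icc]; omega)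
          · intro h
            have hbb : b ∈ Finset.Icc a b := Finset.mem_Icc.mpr ⟨hab, le_refl b⟩
            rw [← h, Finset.mem_inter, Finset.mem_Icc, Finset.mem_Icc] at hbb
            omega
          · intro h
            have hcc : c ∈ Finset.Icc c d := Finset.mem_Icc.mpr ⟨le_refl c, by omega⟩
            rw [← h, Finset.mem_inter, Finset.mem_Icc, Finset.mem_Icc] at hcc
            omega
        · right
          constructor
          · rw [Finset.eq_empty_iff_forall_notMem]
            intro x
            rw [Finset.mem_inter, Finset.mem_Icc, Finset.mem_Icc]
            omega
          · refine ⟨c, b, hc1, by omega, by omega, ?_⟩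
            ext x
            simp only [Finset.mem_union, Finset.mem_Icc]
            omega
      · -- right side: c ∈ [a+1, b+1], d ∈ [b+1, n+1]
        refine ⟨⟨c, d, by omega, by omega, hd2, rfl⟩, ?_⟩
        by_cases hcb : c ≤ b
        · left
          refine ⟨?_, ?_, ?_⟩
          · exact Finset.ne_empty_of_mem (a := b)
              (by rw [Finset.mem_inter, Finset.mem_Icc, Finset.mem_Icc]; omega)
          · intro h
            have haa : a ∈ Finset.Icc a b := Finset.mem_Icc.mpr ⟨le_refl a, hab⟩
            rw [← h, Finset.mem_inter, Finset.mem_Icc, Finset.mem_Icc] at haa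
            omega
          · intro h
            have hdd : d ∈ Finset.Icc c d := Finset.mem_Icc.mpr ⟨by omega, le_refl d⟩
            rw [← h, Finset.mem_inter, Finset.mem_Icc, Finset.mem_Icc] at hdd
            omega
        · right
          constructor
          · rw [Finset.eq_empty_iff_forall_notMem]
            intro x
            rw [Finset.mem_inter, Finset.mem_Icc, Finset.mem_Icc]
            omega
          · refine ⟨a, d, ha, by omega, hd2, ?_⟩
            ext x
            simp only [Finset.mem_union, Finset.mem_Icc]
            omega
  have h1 : iCount n (Finset.Icc a b) = S.card := by
    rw [iCount, ← Nat.card_eq_finsetCard]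
    exact Nat.card_congr (Equiv.subtypeEquivRight hiff)
  rw [h1]
  have h2 : S.card = T.card := by
    rw [hS]
    apply Finset.card_image_of_injOn
    intro p hp q hq he
    rw [Finset.mem_coe, hTmem] at hp hq
    have hp' : p.1 ≤ p.2 := by omega
    have hq' : q.1 ≤ q.2 := by omega
    have := icc_inj hp' hq' he
    exact Prod.ext this.1 this.2
  rw [h2, hT]
  rw [Finset.card_union_of_disjoint, Finset.card_product, Finset.card_product]
  · obtain ⟨p, q, r, rfl, rfl, rfl⟩ :
        ∃ p q r, a = p + 1 ∧ b = p + 1 + q ∧ n = p + q + r :=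
      ⟨a - 1, b - a, n - (b - 1), by omega, by omega, by omega⟩
    simp only [Nat.card_Icc]
    have e1 : p + 1 + q - (p + 1) + 1 = q + 1 := by omega
    have e2 : p + q + r + (p + 1) - (p + 1 + q) = p + r := by omega
    have e3 : p + 1 - 1 + 1 - 1 = p := by omega
    have e4 : p + 1 + q - 1 + 1 - (p + 1 - 1) = q + 1 := by omega
    have e5 : p + 1 + q + 1 + 1 - (p + 1 + 1) = q + 1 := by omega
    have e6 : p + q + r + 1 + 1 - (p + 1 + q + 1) = r := by omega
    rw [e1, e2, e3, e4, e5, e6]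
    ring
  · rw [Finset.disjoint_left]
    intro p hp hq
    rw [Finset.mem_product, Finset.mem_Icc, Finset.mem_Icc] at hp hq
    omega

lemma prod_le (m s : ℕ) (hm : m ≤ s) : m * (s - m) ≤ s ^ 2 / 4 := by
  rw [Nat.le_div_iff_mul_le (by norm_num)]
  obtain ⟨t, rfl⟩ : ∃ t, s = m + t := ⟨s - m, by omega⟩
  have h : m + t - m = t := by omega
  rw [h]
  nlinarith [two_mul_le_add_sq m t]

lemma iMax_eq (n : ℕ) (hn : 3 ≤ n) : iMax n = (n + 1) ^ 2 / 4 := by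
  have hub : ∀ k ∈ {k | ∃ γ : Finset ℕ, IsInterval n γ ∧ iCount n γ = k},
      k ≤ (n + 1) ^ 2 / 4 := by
    rintro k ⟨γ, ⟨a, b, ha, hab, hb, rfl⟩, rfl⟩
    rw [iCount_eq n a b ha hab hb]
    have h : n + a - b = (n + 1) - (b - a + 1) := by omega
    rw [h]
    exact prod_le (b - a + 1) (n + 1) (by omega)
  have hmem : (n + 1) ^ 2 / 4 ∈ {k | ∃ γ : Finset ℕ, IsInterval n γ ∧ iCount n γ = k} := by
    refine ⟨Finset.Icc 1 ((n + 1) / 2), ⟨1, (n + 1) / 2, le_refl 1, by omega, by omega, rfl⟩, ?_⟩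
    rw [iCount_eq n 1 ((n + 1) / 2) (le_refl 1) (by omega) (by omega)]
    rcases Nat.even_or_odd n with ⟨k, rfl⟩ | ⟨k, rfl⟩
    · have hk : 1 ≤ k := by omega
      have h1 : (k + k + 1) / 2 = k := by omega
      rw [h1]
      have h2 : k - 1 + 1 = k := by omega
      have h3 : k + k + 1 - k = k + 1 := by omega
      rw [h2, h3]
      have h4 : (k + k + 1) ^ 2 = 4 * (k * (k + 1)) + 1 := by ring
      rw [h4]
      generalize k * (k + 1) = M
      omega
    · have h1 : (2 * k + 1 + 1) / 2 = k + 1 := by omega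
      rw [h1]
      have h2 : k + 1 - 1 + 1 = k + 1 := by omega
      rw [h2]
      have h3 : 2 * k + 1 + 1 - (k + 1) = k + 1 := by omega
      rw [h3]
      have h4 : (2 * k + 1 + 1) ^ 2 = 4 * ((k + 1) * (k + 1)) := by ring
      rw [h4]
      generalize (k + 1) * (k + 1) = M
      omega
  refine le_antisymm (csSup_le ⟨_, hmem⟩ hub) (le_csSup ⟨(n + 1) ^ 2 / 4, hub⟩ hmem)

theorem stmt8 {n : ℕ} (hn : 3 ≤ n) :
    (Even n → iMax n = n * (n + 2) / 4) ∧ (Odd n → iMax n = (n + 1) ^ 2 / 4) := by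
  constructor
  · rintro ⟨k, rfl⟩
    rw [iMax_eq _ hn]
    have h1 : (k + k + 1) ^ 2 = 4 * (k * k + k) + 1 := by ring
    have h2 : (k + k) * (k + k + 2) = 4 * (k * k + k) := by ring
    rw [h1, h2]
    generalize k * k + k = M
    omega
  · intro _
    exact iMax_eq _ hn
end

section
/- For any set S of intervals of [n+1] (each a nonempty proper interval) with |S| > i_max + 1, the intersection graph on S — where two intervals I, J are adjacent iff (I ⊆ J or J ⊆ I or I ∩ J = ∅) and not (I ∩ J = ∅ and I ∪ J is an interval) — is connected. -/
/-!
Send the interval `[a, b]` of `[n+1]` to the diagonal `(a, b + 2)` of an `(n+3)`-gon with vertices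
`1, …, n+3`. Two distinct intervals are non-adjacent exactly when their diagonals cross, and this
is also the relation counted by `i(γ)`.

If the graph is disconnected, every diagonal of one component crosses every other diagonal, so
the component and the rest use disjoint sets of `f ≥ 2` and `e ≥ 2` polygon vertices, with
`f + e ≤ n + 3`. A diagonal crossing a fixed one is determined by its endpoint inside and its
endpoint outside the fixed one, so a family using `f` vertices has at most `f² / 4` members, and
`|S| ≤ (f² + e²) / 4 ≤ ((n + 1)² + 4) / 4`. On the other side, the intervals `[c, d]` with
`2 ≤ c ≤ K + 1 ≤ d` all cross `[1, K]`, so `i_max ≥ K (n + 1 - K) ≥ ((n + 1)² - 1) / 4` for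
`K = ⌊(n + 2) / 2⌋`.
-/

open Finset

section Crossing

variable {α : Type*} [LinearOrder α]

def Crosses (p q : α × α) : Prop :=
  p.1 < q.1 ∧ q.1 < p.2 ∧ p.2 < q.2 ∨ q.1 < p.1 ∧ p.1 < q.2 ∧ q.2 < p.2

lemma Crosses.symm {p q : α × α} (h : Crosses p q) : Crosses q p := Or.symm h

lemma Crosses.fst_lt_snd {p q : α × α} (h : Crosses p q) : p.1 < p.2 := by
  rcases h with h | h <;> order

def endpoints (P : Finset (α × α)) : Finset α := P.image Prod.fst ∪ P.image Prod.snd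

lemma mem_endpoints {P : Finset (α × α)} {t : α} :
    t ∈ endpoints P ↔ ∃ p ∈ P, p.1 = t ∨ p.2 = t := by
  simp only [endpoints, mem_union, mem_image, ← exists_or, ← and_or_left]

lemma endpoints_subset_iff {P : Finset (α × α)} {U : Finset α} :
    endpoints P ⊆ U ↔ ∀ p ∈ P, p.1 ∈ U ∧ p.2 ∈ U := by
  simp only [endpoints, union_subset_iff, image_subset_iff, ← forall₂_and]

lemma fst_mem_endpoints {P : Finset (α × α)} {p : α × α} (hp : p ∈ P) : p.1 ∈ endpoints P :=
  mem_endpoints.2 ⟨p, hp, Or.inl rfl⟩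

lemma snd_mem_endpoints {P : Finset (α × α)} {p : α × α} (hp : p ∈ P) : p.2 ∈ endpoints P :=
  mem_endpoints.2 ⟨p, hp, Or.inr rfl⟩

lemma two_le_card_endpoints {P : Finset (α × α)} {p : α × α} (hp : p ∈ P) (hlt : p.1 < p.2) :
    2 ≤ #(endpoints P) := by
  calc 2 = #{p.1, p.2} := (card_pair hlt.ne).symm
    _ ≤ #(endpoints P) := card_le_card <| by
      simp [insert_subset_iff, fst_mem_endpoints hp, snd_mem_endpoints hp]

lemma disjoint_endpoints_of_forall_crosses {P Q : Finset (α × α)}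
    (h : ∀ p ∈ P, ∀ q ∈ Q, Crosses p q) : Disjoint (endpoints P) (endpoints Q) := by
  refine disjoint_left.2 fun t htP htQ => ?_
  obtain ⟨p, hp, hpt⟩ := mem_endpoints.1 htP
  obtain ⟨q, hq, hqt⟩ := mem_endpoints.1 htQ
  rcases h p hp q hq with hc | hc <;> rcases hpt with rfl | rfl <;> rcases hqt with h' | h' <;>
    order

lemma card_le_mul_of_forall_crosses {P : Finset (α × α)} {c : α × α}
    (h : ∀ p ∈ P, Crosses p c) :
    #P ≤ #{t ∈ endpoints P | c.1 < t ∧ t < c.2} * #{t ∈ endpoints P | ¬(c.1 < t ∧ t < c.2)} := by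
  rw [← card_product]
  refine card_le_card_of_injOn (fun p => if c.1 < p.1 then (p.1, p.2) else (p.2, p.1))
    (fun p hp => ?_) (fun p hp q hq hpq => ?_)
  · rw [mem_coe] at hp ⊢
    have h1 := fst_mem_endpoints hp
    have h2 := snd_mem_endpoints hp
    dsimp only
    rcases h p hp with hc | hc
    · rw [if_neg (by order)]
      exact mem_product.2 ⟨mem_filter.2 ⟨h2, hc.2.1, hc.2.2⟩, mem_filter.2 ⟨h1, by order⟩⟩
    · rw [if_pos hc.1]
      exact mem_product.2 ⟨mem_filter.2 ⟨h1, hc.1, hc.2.1⟩, mem_filter.2 ⟨h2, by order⟩⟩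
  · rw [mem_coe] at hp hq
    have hpc := h p hp
    have hqc := h q hq
    dsimp only at hpq
    split_ifs at hpq <;> simp only [Prod.mk.injEq] at hpq <;> obtain ⟨e1, e2⟩ := hpq
    · exact Prod.ext e1 e2
    · rcases hpc with hpc | hpc <;> rcases hqc with hqc | hqc <;> order
    · rcases hpc with hpc | hpc <;> rcases hqc with hqc | hqc <;> order
    · exact Prod.ext e2 e1

lemma four_mul_card_le_sq_card_endpoints {P : Finset (α × α)} {c : α × α}
    (h : ∀ p ∈ P, Crosses p c) : 4 * #P ≤ #(endpoints P) ^ 2 := by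
  set inside := #{t ∈ endpoints P | c.1 < t ∧ t < c.2}
  set outside := #{t ∈ endpoints P | ¬(c.1 < t ∧ t < c.2)}
  calc 4 * #P ≤ 4 * inside * outside := by
        rw [mul_assoc]; exact Nat.mul_le_mul_left 4 (card_le_mul_of_forall_crosses h)
    _ ≤ (inside + outside) ^ 2 := four_mul_le_sq_add _ _
    _ = #(endpoints P) ^ 2 := by rw [card_filter_add_card_filter_not]

lemma four_mul_card_add_card_le_of_forall_crosses {P Q : Finset (α × α)} {p q : α × α}
    (hp : p ∈ P) (hq : q ∈ Q) (h : ∀ p ∈ P, ∀ q ∈ Q, Crosses p q) {U : Finset α}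
    (hU : endpoints P ∪ endpoints Q ⊆ U) : 4 * (#P + #Q) ≤ (#U - 2) ^ 2 + 4 := by
  have hP := four_mul_card_le_sq_card_endpoints fun p' hp' => h p' hp' q hq
  have hQ := four_mul_card_le_sq_card_endpoints fun q' hq' => (h p hp q' hq').symm
  have hP2 := two_le_card_endpoints hp (h p hp q hq).fst_lt_snd
  have hQ2 := two_le_card_endpoints hq (h p hp q hq).symm.fst_lt_snd
  have hPQ : #(endpoints P) + #(endpoints Q) ≤ #U := by
    rw [← card_union_of_disjoint (disjoint_endpoints_of_forall_crosses h)]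
    exact card_le_card hU
  obtain ⟨f, hf⟩ := Nat.exists_eq_add_of_le' hP2
  obtain ⟨e, he⟩ := Nat.exists_eq_add_of_le' hQ2
  have hfe : (f + e + 2) ^ 2 ≤ (#U - 2) ^ 2 := Nat.pow_le_pow_left (by omega) 2
  rw [hf] at hP
  rw [he] at hQ
  nlinarith

lemma SimpleGraph.four_mul_card_le_of_not_connected {V : Type*} [Fintype V]
    {G : SimpleGraph V} (hG : ¬G.Connected) {f : V → α × α} (hf : Function.Injective f)
    (hcross : ∀ x y, x ≠ y → ¬G.Adj x y → Crosses (f x) (f y)) {U : Finset α}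
    (hU : ∀ x, (f x).1 ∈ U ∧ (f x).2 ∈ U) : 4 * Fintype.card V ≤ (#U - 2) ^ 2 + 4 := by
  classical
  rcases isEmpty_or_nonempty V with hV | hV
  · simp
  obtain ⟨v, w, hvw⟩ : ∃ v w, ¬G.Reachable v w := by
    by_contra! h
    exact hG (G.connected_iff.2 ⟨h, hV⟩)
  set A := univ.filter (G.Reachable v)
  set B := univ.filter fun x => ¬G.Reachable v x
  have hAB : ∀ p ∈ A.image f, ∀ q ∈ B.image f, Crosses p q := by
    simp only [A, B, mem_image, mem_filter, mem_univ, true_and]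
    rintro _ ⟨x, hx, rfl⟩ _ ⟨y, hy, rfl⟩
    exact hcross x y (by rintro rfl; exact hy hx) fun hxy => hy (hx.trans hxy.reachable)
  have hsub : endpoints (A.image f) ∪ endpoints (B.image f) ⊆ U := by
    simp only [union_subset_iff, endpoints_subset_iff, forall_mem_image]
    exact ⟨fun x _ => hU x, fun x _ => hU x⟩
  have key := four_mul_card_add_card_le_of_forall_crosses
    (mem_image_of_mem f (show v ∈ A by simp [A])) (mem_image_of_mem f (show w ∈ B by simp [B, hvw]))
    hAB hsub
  rwa [card_image_of_injective _ hf, card_image_of_injective _ hf,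
    card_filter_add_card_filter_not, card_univ] at key

end Crossing

noncomputable def diagonal (I : Finset ℕ) : ℕ × ℕ := (sInf (I : Set ℕ), sSup (I : Set ℕ) + 2)

lemma diagonal_Icc {a b : ℕ} (h : a ≤ b) : diagonal (Icc a b) = (a, b + 2) := by
  simp [diagonal, csInf_Icc h, csSup_Icc h]

lemma Finset.Icc_inter_Icc_eq_empty_iff {α : Type*} [LinearOrder α] [LocallyFiniteOrder α]
    {a b c d : α} :
    Icc a b ∩ Icc c d = ∅ ↔ min b d < max a c := by
  rw [← coe_inj, coe_inter, coe_Icc, coe_Icc, Set.Icc_inter_Icc, coe_empty, Set.Icc_eq_empty_iff,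
    not_le]

lemma isInterval_Icc_union_Icc_iff {n a b c d : ℕ} (ha : 1 ≤ a) (hab : a ≤ b) (hbc : b < c)
    (hcd : c ≤ d) (hd : d ≤ n + 1) : IsInterval n (Icc a b ∪ Icc c d) ↔ c = b + 1 := by
  constructor
  · rintro ⟨u, w, -, -, -, huw⟩
    have hmem : ∀ x, (a ≤ x ∧ x ≤ b ∨ c ≤ x ∧ x ≤ d) ↔ u ≤ x ∧ x ≤ w := by
      simpa only [Finset.ext_iff, mem_union, mem_Icc] using huw
    have := (hmem a).1 (by omega)
    have := (hmem d).1 (by omega)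
    have := (hmem (b + 1)).2 (by omega)
    omega
  · rintro rfl
    refine ⟨a, d, ha, by omega, hd, ?_⟩
    ext x
    simp only [mem_union, mem_Icc]
    omega

lemma IsInterval.iRel_iff_crosses {n : ℕ} {I J : Finset ℕ} (hI : IsInterval n I)
    (hJ : IsInterval n J) : iRel n I J ↔ Crosses (diagonal I) (diagonal J) := by
  obtain ⟨a, b, ha, hab, hb, rfl⟩ := hI
  obtain ⟨c, d, hc, hcd, hd, rfl⟩ := hJ
  simp only [iRel, diagonal_Icc hab, diagonal_Icc hcd, Crosses, ne_eq, inter_eq_left,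
    inter_eq_right, Icc_subset_Icc_iff hab, Icc_subset_Icc_iff hcd, Icc_inter_Icc_eq_empty_iff]
  by_cases hbc : b < c
  · rw [isInterval_Icc_union_Icc_iff ha hab hbc hcd hd]
    omega
  by_cases hda : d < a
  · rw [union_comm, isInterval_Icc_union_Icc_iff hc hcd hda hab hb]
    omega
  have hdisj : ¬ min b d < max a c := by omega
  simp only [hdisj, false_and, or_false, not_false_eq_true, true_and]
  omega

lemma IsInterval.diagonal_mem_Icc {n : ℕ} {I : Finset ℕ} (hI : IsInterval n I) :
    (diagonal I).1 ∈ Icc 1 (n + 3) ∧ (diagonal I).2 ∈ Icc 1 (n + 3) := by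
  obtain ⟨a, b, ha, hab, hb, rfl⟩ := hI
  simp only [diagonal_Icc hab, mem_Icc]
  omega

lemma injOn_diagonal (n : ℕ) : Set.InjOn diagonal {I | IsInterval n I} := by
  rintro _ ⟨a, b, -, hab, -, rfl⟩ _ ⟨c, d, -, hcd, -, rfl⟩ h
  simp only [diagonal_Icc hab, diagonal_Icc hcd, Prod.mk.injEq, add_left_inj] at h
  rw [h.1, h.2]

lemma setOf_isInterval_finite (n : ℕ) : {I | IsInterval n I}.Finite :=
  (Icc 1 (n + 1)).powerset.finite_toSet.subset fun _ ⟨_, _, ha, _, hb, hI⟩ => by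
    rw [hI, mem_coe, mem_powerset]
    exact Icc_subset_Icc ha hb

lemma iCount_le_iMax {n : ℕ} {γ : Finset ℕ} (hγ : IsInterval n γ) : iCount n γ ≤ iMax n := by
  refine le_csSup ⟨{I | IsInterval n I}.ncard, ?_⟩ ⟨γ, hγ, rfl⟩
  rintro _ ⟨γ', -, rfl⟩
  exact Set.ncard_le_ncard (fun J hJ => hJ.1) (setOf_isInterval_finite n)

lemma mul_le_iCount_Icc {n K : ℕ} (hK : 1 ≤ K) (hKn : K ≤ n + 1) :
    K * (n + 1 - K) ≤ iCount n (Icc 1 K) := by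
  set W := (Icc 2 (K + 1) ×ˢ Icc (K + 1) (n + 1)).image fun p => Icc p.1 p.2
  have hW : (W : Set (Finset ℕ)) ⊆ {J | IsInterval n J ∧ iRel n (Icc 1 K) J} := by
    simp only [W, coe_image, Set.image_subset_iff]
    rintro ⟨c, d⟩ hcd
    simp only [coe_product, Set.mem_prod, mem_coe, mem_Icc] at hcd
    have hJ : IsInterval n (Icc c d) := ⟨c, d, by omega, by omega, by omega, rfl⟩
    refine ⟨hJ, (IsInterval.iRel_iff_crosses ⟨1, K, le_rfl, hK, hKn, rfl⟩ hJ).2 ?_⟩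
    rw [diagonal_Icc hK, diagonal_Icc (by omega), Crosses]
    omega
  have hWcard : #W = K * (n + 1 - K) := by
    rw [card_image_of_injOn, card_product, Nat.card_Icc, Nat.card_Icc]
    · congr 1
      omega
    · rintro ⟨a, b⟩ hab ⟨c, d⟩ hcd h
      simp only [coe_product, Set.mem_prod, mem_coe, mem_Icc] at hab hcd
      have := congrArg diagonal h
      simp only [diagonal_Icc (show a ≤ b by omega), diagonal_Icc (show c ≤ d by omega),
        Prod.mk.injEq] at this ⊢
      omega
  rw [← hWcard, ← Set.ncard_coe_finset]
  exact Set.ncard_le_ncard hW ((setOf_isInterval_finite n).subset fun J hJ => hJ.1)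

lemma sq_le_four_mul_iMax_add_one (n : ℕ) : (n + 1) ^ 2 ≤ 4 * iMax n + 1 := by
  have h := (mul_le_iCount_Icc (n := n) (K := (n + 2) / 2) (by omega) (by omega)).trans
    (iCount_le_iMax ⟨1, (n + 2) / 2, le_rfl, by omega, by omega, rfl⟩)
  obtain ⟨m, rfl | rfl⟩ := Nat.even_or_odd' n
  · rw [show (2 * m + 2) / 2 = m + 1 by omega, show 2 * m + 1 - (m + 1) = m by omega] at h
    nlinarith
  · rw [show (2 * m + 1 + 2) / 2 = m + 1 by omega, show 2 * m + 1 + 1 - (m + 1) = m + 1 by omega]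
      at h
    nlinarith

theorem stmt12 {n : ℕ} (S : Finset (Finset ℕ))
    (hS : ∀ I ∈ S, IsInterval n I ∧ I ≠ Finset.Icc 1 (n + 1))
    (hcard : iMax n + 1 < S.card) :
    (SimpleGraph.fromRel fun I J : {I // I ∈ S} =>
        (I.1 ⊆ J.1 ∨ J.1 ⊆ I.1 ∨ I.1 ∩ J.1 = ∅) ∧
          ¬(I.1 ∩ J.1 = ∅ ∧ IsInterval n (I.1 ∪ J.1))).Connected := by
  by_contra hconn
  have hint (I : {I // I ∈ S}) : IsInterval n I.1 := (hS I.1 I.2).1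
  have hbound := SimpleGraph.four_mul_card_le_of_not_connected hconn
    (f := fun I => diagonal I.1) (U := Icc 1 (n + 3))
    (fun I J h => Subtype.ext (injOn_diagonal n (hint I) (hint J) h))
    (fun I J hIJ hadj => by
      rw [SimpleGraph.fromRel_adj, not_and, not_or] at hadj
      refine ((hint I).iRel_iff_crosses (hint J)).1 ?_
      simp only [iRel, ne_eq, inter_eq_left, inter_eq_right]
      tauto)
    (fun I => (hint I).diagonal_mem_Icc)
  rw [Fintype.card_coe, Nat.card_Icc, show n + 3 + 1 - 1 - 2 = n + 1 by omega] at hbound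
  have := sq_le_four_mul_iMax_add_one n
  omega
end
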